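/- Let H be a reflective connected bipartite graph which satisfies Sidorenko's conjecture, and let K ≥ 1. Then there are positive constants c = c(H) and C = C(H, K) such that: if G is a K-almost regular bipartite n-vertex graph with edge density p satisfying n^{v(H)} · p^{e(H)} ≥ C · n · (pn)^t, where t is the size of the larger part of the bipartition of H, then G contains at least c · n^{v(H)} · p^{e(H)} copies of H. -/

import Mathlib

open SimpleGraph

/-- `hom(H, G)`: the number of graph homomorphisms from `H` to `G`. -/
noncomputable def homCount {α β : Type} (H : SimpleGraph α) (G : SimpleGraph β) : ℕ :=
  Nat.card (H →g G)

/-- `hom(H, G; R)`: homomorphisms mapping all of `R` to one common vertex. -/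
noncomputable def homCountOn {α β : Type} (H : SimpleGraph α) (G : SimpleGraph β)
    (R : Set α) : ℕ :=
  Nat.card {f : H →g G // ∃ v : β, ∀ u ∈ R, f u = v}

/-- The fixed-point set `F_φ` of a graph automorphism `φ`. -/
def FixedSet {V : Type} {H : SimpleGraph V} (φ : H ≃g H) : Set V := {v | φ v = v}

/-- `(A, B, φ)` is a nice triple of `H`: `φ` is an involutive automorphism; `A`, `B` and
`F_φ` partition `V(H)`; `F_φ` separates `A` and `B` (every walk from `A` to `B` meets
`F_φ`); and `φ(A) = B`. -/
def IsNiceTriple {V : Type} (H : SimpleGraph V) (A B : Set V) (φ : H ≃g H) : Prop :=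
  (∀ v, φ (φ v) = v) ∧
  Disjoint A B ∧ Disjoint A (FixedSet φ) ∧ Disjoint B (FixedSet φ) ∧
  A ∪ B ∪ FixedSet φ = Set.univ ∧
  (∀ a ∈ A, ∀ b ∈ B, ∀ w : H.Walk a b, ∃ v ∈ w.support, v ∈ FixedSet φ) ∧
  ⇑φ '' A = B

/-- `H` is bipartite with parts `X₁` and `X₂`. -/
def IsBipartitionOf {V : Type} (H : SimpleGraph V) (X₁ X₂ : Set V) : Prop :=
  Disjoint X₁ X₂ ∧ X₁ ∪ X₂ = Set.univ ∧
  ∀ ⦃u v⦄, H.Adj u v → (u ∈ X₁ ∧ v ∈ X₂) ∨ (u ∈ X₂ ∧ v ∈ X₁)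

/-- `R` is admissible for the nice triple `(A, B, φ)` (relative to the bipartition
`X₁, X₂` of `H`): all vertices of `R` lie in the same part, and `R` meets both
`A ∪ F_φ` and `B ∪ F_φ`. -/
def IsAdmissible {V : Type} {H : SimpleGraph V} (X₁ X₂ A B : Set V) (φ : H ≃g H)
    (R : Set V) : Prop :=
  (R ⊆ X₁ ∨ R ⊆ X₂) ∧ (R ∩ (A ∪ FixedSet φ)).Nonempty ∧ (R ∩ (B ∪ FixedSet φ)).Nonempty

/-- `ψ_{A,B,φ}(R) = (R ∩ (A ∪ F_φ)) ∪ φ(R ∩ A)`. -/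
def psiSet {V : Type} {H : SimpleGraph V} (A : Set V) (φ : H ≃g H) (R : Set V) : Set V :=
  (R ∩ (A ∪ FixedSet φ)) ∪ ⇑φ '' (R ∩ A)

/-- `H` (connected bipartite, with parts `X₁, X₂`) is reflective: every two-element
subset `R` of a part `X` can be transformed into `X` by a sequence of reflections
`R_{j+1} = ψ_{A_j,B_j,φ_j}(R_j)` along nice triples for which `R_j` is admissible. -/
def IsReflective {V : Type} (H : SimpleGraph V) (X₁ X₂ : Set V) : Prop :=
  ∀ X : Set V, X = X₁ ∨ X = X₂ → ∀ R : Set V, R ⊆ X → R.ncard = 2 →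
    ∃ (m : ℕ) (A B : ℕ → Set V) (φ : ℕ → (H ≃g H)) (Rs : ℕ → Set V),
      Rs 0 = R ∧ Rs m = X ∧
      ∀ j < m, IsNiceTriple H (A j) (B j) (φ j) ∧
        IsAdmissible X₁ X₂ (A j) (B j) (φ j) (Rs j) ∧
        Rs (j + 1) = psiSet (A j) (φ j) (Rs j)

/-- `H` satisfies Sidorenko's conjecture: for every `n`-vertex graph `G` with edge
density `p`, `hom(H, G) ≥ n^(v(H)) · p^(e(H))`. -/
def SatisfiesSidorenko {V : Type} [Fintype V] (H : SimpleGraph V) : Prop :=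
  ∀ (n : ℕ) (G : SimpleGraph (Fin n)) (p : ℝ),
    (G.edgeSet.ncard : ℝ) = p * (n : ℝ) ^ 2 / 2 →
    (n : ℝ) ^ (Fintype.card V) * p ^ (H.edgeSet.ncard) ≤ (homCount H G : ℝ)

/-- The number of copies of `H` in `G`, i.e. the number of subgraphs of `G`
isomorphic to `H`. -/
noncomputable def copyCount {α β : Type} (H : SimpleGraph α) (G : SimpleGraph β) : ℕ :=
  Set.ncard {G' : G.Subgraph | Nonempty (H ≃g G'.coe)}

/-- The degree of the vertex `v` in `G`. -/
noncomputable def deg {V : Type} (G : SimpleGraph V) (v : V) : ℕ :=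
  (G.neighborSet v).ncard

/-- `G` is bipartite. -/
def IsBipartite {V : Type} (G : SimpleGraph V) : Prop :=
  ∃ X : Set V, ∀ ⦃u v⦄, G.Adj u v → (u ∈ X ↔ v ∉ X)


/-!
For a nice triple `(A, B, φ)` the fixed set `F_φ` separates `A` from `B`, so a homomorphism
`H → G` is the same thing as a pair of `φ`-invariant homomorphisms agreeing on `F_φ`: fold its
`A`-side and its `B`-side onto `A ∪ F_φ`. Counting homomorphisms collapsing `R` through this
correspondence and applying Cauchy–Schwarz gives `hom(H,G;R)² ≤ hom(H,G;ψ(R)) · hom(H,G)`, so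
along a reflection sequence from a pair `{u, w}` to a whole part `X` the collapsing fractions
satisfy `(hom(H,G;{u,w}) / hom(H,G)) ^ 2 ^ m ≤ hom(H,G;X) / hom(H,G)`.

In a `K`-almost regular `G` every degree is at most `K p n`, so `hom(H,G;X) ≤ n (K p n)^t`,
which by Sidorenko and the density hypothesis is a tiny fraction of `hom(H,G)` once `C` is
large. Homomorphisms identifying two vertices of one part are therefore rare, those
identifying vertices of different parts do not exist because `G` is bipartite and `H`
connected, so at least half of all homomorphisms are injective, and each copy of `H` accounts
for at most `v(H) ^ v(H)` of them.
-/

open Finset in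
theorem natCard_pullback_eq_sum {α β ι : Type*} [Fintype α] [Fintype β] [DecidableEq ι]
    (f : α → ι) (g : β → ι) (U : Finset ι) (hU : ∀ a, f a ∈ U) :
    Nat.card {p : α × β // f p.1 = g p.2} = ∑ i ∈ U, #{a | f a = i} * #{b | g b = i} := by
  classical
  rw [Nat.card_eq_fintype_card, Fintype.card_subtype,
    card_eq_sum_card_fiberwise (f := fun p => f p.1) (t := U) fun p _ => hU p.1]
  refine sum_congr rfl fun i _ => ?_
  rw [← card_product]
  congr 1
  ext ⟨a, b⟩
  simp only [mem_filter, mem_univ, true_and, mem_product]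
  constructor
  · rintro ⟨hab, rfl⟩; exact ⟨rfl, hab.symm⟩
  · rintro ⟨rfl, hb⟩; exact ⟨hb.symm, rfl⟩

theorem natCard_pullback_sq_le {α β ι : Type*} [Finite α] [Finite β] (f : α → ι) (g : β → ι) :
    Nat.card {p : α × β // f p.1 = g p.2} ^ 2 ≤
      Nat.card {p : α × α // f p.1 = f p.2} * Nat.card {p : β × β // g p.1 = g p.2} := by
  classical
  have := Fintype.ofFinite α
  have := Fintype.ofFinite β
  set U := Finset.univ.image f ∪ Finset.univ.image g
  have hf : ∀ a, f a ∈ U := fun a => Finset.mem_union_left _ (Finset.mem_image_of_mem f (by simp))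
  have hg : ∀ b, g b ∈ U := fun b => Finset.mem_union_right _ (Finset.mem_image_of_mem g (by simp))
  rw [natCard_pullback_eq_sum f g U hf, natCard_pullback_eq_sum f f U hf,
    natCard_pullback_eq_sum g g U hg]
  simpa only [sq] using Finset.sum_mul_sq_le_sq_mul_sq U _ _

theorem homCountOn_le_homCount {V W : Type} [Finite V] [Finite W] (H : SimpleGraph V)
    (G : SimpleGraph W) (R : Set V) : homCountOn H G R ≤ homCount H G :=
  Nat.card_le_card_of_injective Subtype.val Subtype.val_injective

theorem union_image_eq_psiSet {V : Type} {H : SimpleGraph V} {A : Set V} {φ : H ≃g H}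
    (R : Set V) : R ∩ (A ∪ FixedSet φ) ∪ φ '' (R ∩ (A ∪ FixedSet φ)) = psiSet A φ R := by
  ext x
  constructor
  · rintro (hx | ⟨y, ⟨hyR, hyA | hyF⟩, rfl⟩)
    · exact Or.inl hx
    · exact Or.inr ⟨y, ⟨hyR, hyA⟩, rfl⟩
    · rw [show φ y = y from hyF]; exact Or.inl ⟨hyR, Or.inr hyF⟩
  · rintro (hx | ⟨y, ⟨hyR, hyA⟩, rfl⟩)
    · exact Or.inl hx
    · exact Or.inr ⟨y, ⟨hyR, Or.inl hyA⟩, rfl⟩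

abbrev InvariantHomCollapsing {V W : Type} {H : SimpleGraph V} (G : SimpleGraph W) (φ : H ≃g H)
    (T : Set V) : Type :=
  {g : H →g G // (∀ x, g (φ x) = g x) ∧ ∃ w, ∀ x ∈ T, g x = w}

def fixedKey {V W : Type} {H : SimpleGraph V} {G : SimpleGraph W} (φ : H ≃g H) (t : V)
    (g : H →g G) : (FixedSet φ → W) × W :=
  (fun x => g x, g t)

theorem eqOn_fixedSet_of_fixedKey_eq {V W : Type} {H : SimpleGraph V} {G : SimpleGraph W}
    {φ : H ≃g H} {t₁ t₂ : V} {g₁ g₂ : H →g G} (h : fixedKey φ t₁ g₁ = fixedKey φ t₂ g₂) :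
    ∀ x ∈ FixedSet φ, g₁ x = g₂ x :=
  fun x hx => congrFun (congrArg Prod.fst h) ⟨x, hx⟩

namespace IsNiceTriple

variable {V W : Type} {H : SimpleGraph V} {G : SimpleGraph W} {A B : Set V} {φ : H ≃g H}
  (hn : IsNiceTriple H A B φ)
include hn

theorem apply_apply (x : V) : φ (φ x) = x := hn.1 x

theorem mem_B_iff {x : V} : x ∈ B ↔ x ∉ A ∪ FixedSet φ := by
  obtain ⟨-, hAB, hAF, hBF, hcover, -, -⟩ := hn
  have hx : x ∈ A ∪ B ∪ FixedSet φ := hcover ▸ Set.mem_univ x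
  constructor
  · rintro hB (hA | hF)
    exacts [hAB.ne_of_mem hA hB rfl, hBF.ne_of_mem hB hF rfl]
  · intro h
    rcases hx with (hA | hB) | hF
    exacts [absurd (Or.inl hA) h, hB, absurd (Or.inr hF) h]

theorem apply_mem_B {x : V} (hx : x ∈ A) : φ x ∈ B := hn.2.2.2.2.2.2 ▸ ⟨x, hx, rfl⟩

theorem apply_mem_A {x : V} (hx : x ∈ B) : φ x ∈ A := by
  obtain ⟨a, ha, rfl⟩ := hn.2.2.2.2.2.2 ▸ hx
  rwa [hn.apply_apply]

theorem apply_mem_of_mem_B_union {x : V} (hx : x ∈ B ∪ FixedSet φ) : φ x ∈ A ∪ FixedSet φ := by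
  rcases hx with hx | hx
  · exact Or.inl (hn.apply_mem_A hx)
  · exact Or.inr (show φ (φ x) = φ x by rw [hx, hx])

theorem not_adj {a b : V} (ha : a ∈ A) (hb : b ∈ B) : ¬ H.Adj a b := fun hab => by
  obtain ⟨v, hv, hvF⟩ := hn.2.2.2.2.2.1 a ha b hb (.cons hab .nil)
  simp only [SimpleGraph.Walk.support_cons, SimpleGraph.Walk.support_nil, List.mem_cons,
    List.not_mem_nil, or_false] at hv
  rcases hv with rfl | rfl
  exacts [hn.2.2.1.ne_of_mem ha hvF rfl, hn.2.2.2.1.ne_of_mem hb hvF rfl]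

open Classical in
noncomputable def glue (g₁ g₂ : H →g G) (hg : ∀ x ∈ FixedSet φ, g₁ x = g₂ x) : H →g G where
  toFun := (A ∪ FixedSet φ).piecewise g₁ g₂
  map_rel' := by
    intro x y hxy
    by_cases hx : x ∈ A ∪ FixedSet φ <;> by_cases hy : y ∈ A ∪ FixedSet φ <;>
      simp only [Set.piecewise_eq_of_mem, Set.piecewise_eq_of_notMem, hx, hy, not_false_iff]
    · exact g₁.map_adj hxy
    · rcases hx with hx | hx
      · exact absurd hxy (hn.not_adj hx (hn.mem_B_iff.2 hy))
      · rw [hg x hx]; exact g₂.map_adj hxy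
    · rcases hy with hy | hy
      · exact absurd hxy.symm (hn.not_adj hy (hn.mem_B_iff.2 hx))
      · rw [hg y hy]; exact g₂.map_adj hxy
    · exact g₂.map_adj hxy

variable {g₁ g₂ : H →g G} {hg : ∀ x ∈ FixedSet φ, g₁ x = g₂ x}

open Classical in
theorem glue_apply_of_mem {x : V} (hx : x ∈ A ∪ FixedSet φ) : hn.glue g₁ g₂ hg x = g₁ x :=
  Set.piecewise_eq_of_mem _ _ _ hx

open Classical in
theorem glue_apply_of_mem_B {x : V} (hx : x ∈ B) : hn.glue g₁ g₂ hg x = g₂ x :=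
  Set.piecewise_eq_of_notMem _ _ _ (hn.mem_B_iff.1 hx)

noncomputable def fold (f : H →g G) : H →g G :=
  hn.glue f (f.comp φ.toHom) fun _ hx => congrArg f hx.symm

theorem fold_apply_of_mem (f : H →g G) {x : V} (hx : x ∈ A ∪ FixedSet φ) : hn.fold f x = f x :=
  hn.glue_apply_of_mem hx

theorem fold_apply_of_mem_B (f : H →g G) {x : V} (hx : x ∈ B) : hn.fold f x = f (φ x) :=
  hn.glue_apply_of_mem_B hx

theorem fold_apply_apply (f : H →g G) (x : V) : hn.fold f (φ x) = hn.fold f x := by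
  by_cases hx : x ∈ A ∪ FixedSet φ
  · rcases hx with hx | hx
    · rw [hn.fold_apply_of_mem_B f (hn.apply_mem_B hx), hn.apply_apply,
        hn.fold_apply_of_mem f (Or.inl hx)]
    · rw [show φ x = x from hx]
  · have hx := hn.mem_B_iff.2 hx
    rw [hn.fold_apply_of_mem f (Or.inl (hn.apply_mem_A hx)), hn.fold_apply_of_mem_B f hx]

theorem glue_fold (f : H →g G) :
    hn.glue (hn.fold f) (hn.fold (f.comp φ.toHom))
      (fun x hx => by simp [hn.fold_apply_of_mem _ (Or.inr hx), show φ x = x from hx]) = f := by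
  ext x
  by_cases hx : x ∈ A ∪ FixedSet φ
  · rw [hn.glue_apply_of_mem hx, hn.fold_apply_of_mem f hx]
  · have hx := hn.mem_B_iff.2 hx
    rw [hn.glue_apply_of_mem_B hx, hn.fold_apply_of_mem_B _ hx]
    simp [hn.apply_apply]

theorem fold_glue (h₁ : ∀ x, g₁ (φ x) = g₁ x) : hn.fold (hn.glue g₁ g₂ hg) = g₁ := by
  ext x
  by_cases hx : x ∈ A ∪ FixedSet φ
  · rw [hn.fold_apply_of_mem _ hx, hn.glue_apply_of_mem hx]
  · have hx := hn.mem_B_iff.2 hx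
    rw [hn.fold_apply_of_mem_B _ hx, hn.glue_apply_of_mem (Or.inl (hn.apply_mem_A hx)), h₁]

theorem fold_comp_glue (h₂ : ∀ x, g₂ (φ x) = g₂ x) :
    hn.fold ((hn.glue g₁ g₂ hg).comp φ.toHom) = g₂ := by
  ext x
  by_cases hx : x ∈ A ∪ FixedSet φ
  · rw [hn.fold_apply_of_mem _ hx]
    rcases hx with hx | hx
    · simp [hn.glue_apply_of_mem_B (hn.apply_mem_B hx), h₂]
    · simp [show φ x = x from hx, hn.glue_apply_of_mem (Or.inr hx), hg x hx]
  · have hx := hn.mem_B_iff.2 hx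
    simp [hn.fold_apply_of_mem_B _ hx, hn.apply_apply, hn.glue_apply_of_mem_B hx]

theorem glue_apply_apply (h₂ : ∀ x, g₂ (φ x) = g₂ x) {y : V} (hy : y ∈ A ∪ FixedSet φ) :
    hn.glue g₁ g₂ hg (φ y) = g₂ y := by
  have := DFunLike.congr_fun (hn.fold_comp_glue (hg := hg) h₂) y
  rwa [hn.fold_apply_of_mem _ hy] at this

theorem glue_collapses {T₁ T₂ : Set V} (hT₁ : T₁ ⊆ A ∪ FixedSet φ) (hT₂ : T₂ ⊆ A ∪ FixedSet φ)
    (h₂ : ∀ x, g₂ (φ x) = g₂ x) {w : W} (hw₁ : ∀ x ∈ T₁, g₁ x = w) (hw₂ : ∀ x ∈ T₂, g₂ x = w) :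
    ∀ x ∈ T₁ ∪ φ '' T₂, hn.glue g₁ g₂ hg x = w := by
  rintro _ (hx | ⟨y, hy, rfl⟩)
  · rw [hn.glue_apply_of_mem (hT₁ hx), hw₁ _ hx]
  · rw [hn.glue_apply_apply h₂ (hT₂ hy), hw₂ y hy]

theorem image_image (X : Set V) : φ '' (φ '' X) = X := by
  simp [Set.image_image, hn.apply_apply]

theorem union_image_eq_self (R : Set V) :
    R ∩ (A ∪ FixedSet φ) ∪ φ '' (φ '' (R ∩ (B ∪ FixedSet φ))) = R := by
  rw [hn.image_image, ← Set.inter_union_distrib_left]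
  refine Set.inter_eq_left.2 fun x _ => ?_
  by_cases hx : x ∈ A ∪ FixedSet φ
  exacts [Or.inl hx, Or.inr (Or.inl (hn.mem_B_iff.2 hx))]

noncomputable def collapsingEquiv {T₁ T₂ : Set V} (hT₁ : T₁ ⊆ A ∪ FixedSet φ)
    (hT₂ : T₂ ⊆ A ∪ FixedSet φ) {t₁ t₂ : V} (ht₁ : t₁ ∈ T₁) (ht₂ : t₂ ∈ T₂) :
    {h : H →g G // ∃ w, ∀ x ∈ T₁ ∪ φ '' T₂, h x = w} ≃
      {p : InvariantHomCollapsing G φ T₁ × InvariantHomCollapsing G φ T₂ //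
        fixedKey φ t₁ p.1.1 = fixedKey φ t₂ p.2.1} where
  toFun h :=
    ⟨(⟨hn.fold h.1, hn.fold_apply_apply h.1, h.1 t₁, fun x hx => by
        obtain ⟨w, hw⟩ := h.2
        rw [hn.fold_apply_of_mem _ (hT₁ hx), hw x (Or.inl hx), hw t₁ (Or.inl ht₁)]⟩,
      ⟨hn.fold (h.1.comp φ.toHom), hn.fold_apply_apply _, h.1 t₁, fun x hx => by
        obtain ⟨w, hw⟩ := h.2
        rw [hn.fold_apply_of_mem _ (hT₂ hx), hw t₁ (Or.inl ht₁)]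
        exact hw _ (Or.inr ⟨x, hx, rfl⟩)⟩),
    by
      obtain ⟨w, hw⟩ := h.2
      simp only [fixedKey, Prod.mk.injEq]
      refine ⟨funext fun x => ?_, ?_⟩
      · simp [hn.fold_apply_of_mem _ (Or.inr x.2), show φ x = x from x.2]
      · rw [hn.fold_apply_of_mem _ (hT₁ ht₁), hn.fold_apply_of_mem _ (hT₂ ht₂), hw t₁ (Or.inl ht₁)]
        exact (hw _ (Or.inr ⟨t₂, ht₂, rfl⟩)).symm⟩
  invFun p :=
    ⟨hn.glue p.1.1.1 p.1.2.1 (eqOn_fixedSet_of_fixedKey_eq p.2), p.1.1.1 t₁, by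
      obtain ⟨⟨⟨g₁, -, w₁, hw₁⟩, ⟨g₂, hg₂, w₂, hw₂⟩⟩, hkey⟩ := p
      have hval : g₁ t₁ = g₂ t₂ := congrArg Prod.snd hkey
      refine hn.glue_collapses hT₁ hT₂ hg₂ (fun x hx => ?_) (fun x hx => ?_)
      · rw [hw₁ x hx, hw₁ t₁ ht₁]
      · rw [hval, hw₂ x hx, hw₂ t₂ ht₂]⟩
  left_inv h := Subtype.ext (hn.glue_fold h.1)
  right_inv p := by
    have hg := eqOn_fixedSet_of_fixedKey_eq p.2
    exact Subtype.ext (Prod.ext (Subtype.ext (hn.fold_glue (hg := hg) p.1.1.2.1))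
      (Subtype.ext (hn.fold_comp_glue (hg := hg) p.1.2.2.1)))

theorem homCountOn_union_image {T₁ T₂ : Set V} (hT₁ : T₁ ⊆ A ∪ FixedSet φ)
    (hT₂ : T₂ ⊆ A ∪ FixedSet φ) {t₁ t₂ : V} (ht₁ : t₁ ∈ T₁) (ht₂ : t₂ ∈ T₂) :
    homCountOn H G (T₁ ∪ φ '' T₂) =
      Nat.card {p : InvariantHomCollapsing G φ T₁ × InvariantHomCollapsing G φ T₂ //
        fixedKey φ t₁ p.1.1 = fixedKey φ t₂ p.2.1} :=
  Nat.card_congr (hn.collapsingEquiv hT₁ hT₂ ht₁ ht₂)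

theorem homCountOn_sq_le [Finite V] [Finite W] {R : Set V}
    (h₁ : (R ∩ (A ∪ FixedSet φ)).Nonempty) (h₂ : (R ∩ (B ∪ FixedSet φ)).Nonempty) :
    homCountOn H G R ^ 2 ≤ homCountOn H G (psiSet A φ R) * homCount H G := by
  obtain ⟨t₁, ht₁⟩ := h₁
  obtain ⟨r₂, hr₂⟩ := h₂
  have hT₁ : R ∩ (A ∪ FixedSet φ) ⊆ A ∪ FixedSet φ := Set.inter_subset_right
  have hT₂ : φ '' (R ∩ (B ∪ FixedSet φ)) ⊆ A ∪ FixedSet φ := by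
    rintro _ ⟨x, hx, rfl⟩
    exact hn.apply_mem_of_mem_B_union hx.2
  have ht₂ : φ r₂ ∈ φ '' (R ∩ (B ∪ FixedSet φ)) := ⟨r₂, hr₂, rfl⟩
  have hR := hn.homCountOn_union_image (G := G) hT₁ hT₂ ht₁ ht₂
  have hψ := hn.homCountOn_union_image (G := G) hT₁ hT₁ ht₁ ht₁
  have hT₂T₂ := hn.homCountOn_union_image (G := G) hT₂ hT₂ ht₂ ht₂
  rw [hn.union_image_eq_self] at hR
  rw [union_image_eq_psiSet] at hψ
  have hcs := natCard_pullback_sq_le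
    (fun g : InvariantHomCollapsing G φ (R ∩ (A ∪ FixedSet φ)) => fixedKey φ t₁ g.1)
    (fun g : InvariantHomCollapsing G φ (φ '' (R ∩ (B ∪ FixedSet φ))) => fixedKey φ (φ r₂) g.1)
  rw [← hT₂T₂] at hcs
  rw [hR, hψ]
  exact hcs.trans (Nat.mul_le_mul_left _ (homCountOn_le_homCount H G _))

end IsNiceTriple

-- `0` when `hom(H, G) = 0`; the inequalities below hold in that case too.
noncomputable def homFractionOn {V W : Type} (H : SimpleGraph V) (G : SimpleGraph W)
    (R : Set V) : ℝ :=
  homCountOn H G R / homCount H G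

section HomFraction

variable {V W : Type} {H : SimpleGraph V} {G : SimpleGraph W}

theorem homFractionOn_nonneg (R : Set V) : 0 ≤ homFractionOn H G R := by
  unfold homFractionOn
  positivity

theorem homFractionOn_le_one [Finite V] [Finite W] (R : Set V) : homFractionOn H G R ≤ 1 :=
  div_le_one_of_le₀ (by exact_mod_cast homCountOn_le_homCount H G R) (Nat.cast_nonneg _)

theorem homFractionOn_le_of_homCountOn_le {R : Set V} {c : ℝ} (hc : 0 ≤ c)
    (h : (homCountOn H G R : ℝ) ≤ c * homCount H G) : homFractionOn H G R ≤ c :=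
  div_le_of_le_mul₀ (Nat.cast_nonneg _) hc h

theorem homCountOn_le_of_homFractionOn_le [Finite V] [Finite W] {R : Set V} {c : ℝ}
    (h : homFractionOn H G R ≤ c) : (homCountOn H G R : ℝ) ≤ c * homCount H G := by
  rcases Nat.eq_zero_or_pos (homCount H G) with h0 | hpos
  · have := homCountOn_le_homCount H G R
    simp [h0, Nat.le_zero.1 (h0 ▸ this)]
  · exact (div_le_iff₀ (by exact_mod_cast hpos)).1 h

theorem IsNiceTriple.homFractionOn_sq_le [Finite V] [Finite W] {A B : Set V} {φ : H ≃g H}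
    (hn : IsNiceTriple H A B φ) {R : Set V} (h₁ : (R ∩ (A ∪ FixedSet φ)).Nonempty)
    (h₂ : (R ∩ (B ∪ FixedSet φ)).Nonempty) :
    homFractionOn H G R ^ 2 ≤ homFractionOn H G (psiSet A φ R) := by
  have hsq : ((homCountOn H G R : ℝ)) ^ 2 ≤ homCountOn H G (psiSet A φ R) * homCount H G := by
    exact_mod_cast hn.homCountOn_sq_le (G := G) h₁ h₂
  unfold homFractionOn
  calc ((homCountOn H G R : ℝ) / homCount H G) ^ 2
      = (homCountOn H G R : ℝ) ^ 2 / homCount H G / homCount H G := by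
        rw [div_pow, sq (homCount H G : ℝ), div_div]
    _ ≤ (homCountOn H G (psiSet A φ R) : ℝ) / homCount H G := by
        gcongr
        exact div_le_of_le_mul₀ (by positivity) (by positivity) hsq

theorem homFractionOn_pow_le_of_reflections [Finite V] [Finite W] {X₁ X₂ : Set V}
    {A B : ℕ → Set V} {φ : ℕ → (H ≃g H)} {Rs : ℕ → Set V} {m : ℕ}
    (h : ∀ j < m, IsNiceTriple H (A j) (B j) (φ j) ∧
      IsAdmissible X₁ X₂ (A j) (B j) (φ j) (Rs j) ∧ Rs (j + 1) = psiSet (A j) (φ j) (Rs j)) :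
    homFractionOn H G (Rs 0) ^ 2 ^ m ≤ homFractionOn H G (Rs m) := by
  induction m with
  | zero => simp
  | succ m ih =>
    obtain ⟨hn, ⟨-, h₁, h₂⟩, hψ⟩ := h m m.lt_succ_self
    calc homFractionOn H G (Rs 0) ^ 2 ^ (m + 1) = (homFractionOn H G (Rs 0) ^ 2 ^ m) ^ 2 := by
          rw [pow_succ, pow_mul]
      _ ≤ homFractionOn H G (Rs m) ^ 2 :=
          pow_le_pow_left₀ (pow_nonneg (homFractionOn_nonneg _) _)
            (ih fun j hj => h j (hj.trans m.lt_succ_self)) 2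
      _ ≤ homFractionOn H G (Rs (m + 1)) := hψ ▸ hn.homFractionOn_sq_le h₁ h₂

end HomFraction

theorem IsReflective.exists_homFractionOn_pow_le {V : Type} [Finite V] {H : SimpleGraph V}
    {X₁ X₂ : Set V} (hrefl : IsReflective H X₁ X₂) :
    ∃ M : ℕ, ∀ X, (X = X₁ ∨ X = X₂) → ∀ u ∈ X, ∀ w ∈ X, u ≠ w →
      ∀ (W : Type) [Finite W] (G : SimpleGraph W),
        homFractionOn H G {u, w} ^ 2 ^ M ≤ homFractionOn H G X := by
  have hpair : ∀ q : {q : Set V × V × V //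
      (q.1 = X₁ ∨ q.1 = X₂) ∧ q.2.1 ∈ q.1 ∧ q.2.2 ∈ q.1 ∧ q.2.1 ≠ q.2.2},
      ∃ m : ℕ, ∀ (W : Type) [Finite W] (G : SimpleGraph W),
        homFractionOn H G {q.1.2.1, q.1.2.2} ^ 2 ^ m ≤ homFractionOn H G q.1.1 := by
    rintro ⟨⟨X, u, w⟩, hX, hu, hw, huw⟩
    obtain ⟨m, A, B, φ, Rs, h0, hm, hseq⟩ :=
      hrefl X hX {u, w} (Set.insert_subset hu (Set.singleton_subset_iff.2 hw)) (Set.ncard_pair huw)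
    exact ⟨m, fun W _ G => h0 ▸ hm ▸ homFractionOn_pow_le_of_reflections hseq⟩
  choose m hm using hpair
  obtain ⟨M, hM⟩ := (Set.finite_range m).bddAbove
  refine ⟨M, fun X hX u hu w hw huw W _ G => ?_⟩
  exact (pow_le_pow_of_le_one (homFractionOn_nonneg _) (homFractionOn_le_one _)
    (Nat.pow_le_pow_right two_pos (hM ⟨_, rfl⟩))).trans (hm ⟨(X, u, w), hX, hu, hw, huw⟩ W G)

namespace IsBipartitionOf

variable {V : Type} {H : SimpleGraph V} {X₁ X₂ : Set V} (hbip : IsBipartitionOf H X₁ X₂)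
include hbip

theorem symm : IsBipartitionOf H X₂ X₁ :=
  ⟨hbip.1.symm, Set.union_comm X₁ X₂ ▸ hbip.2.1, fun _ _ h => (hbip.2.2 h).symm⟩

theorem mem_or_mem (x : V) : x ∈ X₁ ∨ x ∈ X₂ := (hbip.2.1.symm ▸ Set.mem_univ x : x ∈ X₁ ∪ X₂)

theorem exists_adj_mem_left (hconn : H.Preconnected) [Nontrivial V] {y : V} (hy : y ∈ X₂) :
    ∃ x ∈ X₁, H.Adj y x := by
  obtain ⟨x, hyx⟩ := hconn.exists_adj_of_nontrivial y
  rcases hbip.2.2 hyx with ⟨hy', -⟩ | ⟨-, hx⟩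
  exacts [absurd hy (hbip.1.notMem_of_mem_left hy'), ⟨x, hx, hyx⟩]

theorem nonempty_left (hconn : H.Preconnected) [Nontrivial V] : X₁.Nonempty := by
  obtain ⟨y⟩ := (inferInstance : Nontrivial V).to_nonempty
  obtain ⟨x, hyx⟩ := hconn.exists_adj_of_nontrivial y
  rcases hbip.2.2 hyx with ⟨h, -⟩ | ⟨-, h⟩
  exacts [⟨y, h⟩, ⟨x, h⟩]

theorem mem_left_iff_of_apply_eq (hconn : H.Preconnected) {W : Type} {G : SimpleGraph W}
    (hG : _root_.IsBipartite G) (f : H →g G) {u w : V} (h : f u = f w) : u ∈ X₁ ↔ w ∈ X₁ := by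
  classical
  obtain ⟨Y, hY⟩ := hG
  let cH : H.Coloring Bool := Coloring.mk (fun x => decide (x ∈ X₁)) fun hxy => by
    rcases hbip.2.2 hxy with ⟨hx, hy⟩ | ⟨hx, hy⟩
    · simp [hx, hbip.1.notMem_of_mem_right hy]
    · simp [hy, hbip.1.notMem_of_mem_right hx]
  let cG : G.Coloring Bool := Coloring.mk (fun y => decide (y ∈ Y)) fun hxy => by
    have := hY hxy
    simp only [ne_eq, decide_eq_decide]
    tauto
  obtain ⟨p⟩ := hconn u w
  have hH : Even p.length ↔ (decide (u ∈ X₁) ↔ decide (w ∈ X₁)) := cH.even_length_iff_congr p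
  have hG : Even p.length ↔ (decide (f u ∈ Y) ↔ decide (f w ∈ Y)) :=
    Coloring.even_length_iff_congr (cG.comp f) p
  rw [h] at hG
  simpa using hH.symm.trans hG

theorem homCountOn_pair_eq_zero (hconn : H.Preconnected) {W : Type} {G : SimpleGraph W}
    (hG : _root_.IsBipartite G) {u w : V} (hu : u ∈ X₁) (hw : w ∈ X₂) :
    homCountOn H G {u, w} = 0 := by
  have : IsEmpty {f : H →g G // ∃ v, ∀ x ∈ ({u, w} : Set V), f x = v} := by
    refine ⟨fun ⟨f, v, hf⟩ => hbip.1.notMem_of_mem_right hw ?_⟩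
    have hfuw : f u = f w := (hf u (by simp)).trans (hf w (by simp)).symm
    exact (hbip.mem_left_iff_of_apply_eq hconn hG f hfuw).1 hu
  exact Nat.card_of_isEmpty

theorem homCountOn_left_le_sum_deg_pow [Finite V] (hconn : H.Preconnected) [Nontrivial V]
    {W : Type} [Fintype W] (G : SimpleGraph W) :
    homCountOn H G X₁ ≤ ∑ w, deg G w ^ X₂.ncard := by
  obtain ⟨x₀, hx₀⟩ := hbip.nonempty_left hconn
  choose nb hnb using fun y : X₂ => hbip.exists_adj_mem_left hconn y.2
  have hval : ∀ f : {f : H →g G // ∃ v, ∀ x ∈ X₁, f x = v}, ∀ x ∈ X₁, f.1 x = f.1 x₀ := by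
    rintro ⟨f, v, hv⟩ x hx
    rw [hv x hx, hv x₀ hx₀]
  let ι : {f : H →g G // ∃ v, ∀ x ∈ X₁, f x = v} → Σ w : W, (X₂ → G.neighborSet w) :=
    fun f => ⟨f.1 x₀, fun y => ⟨f.1 y, by
      simpa [hval f _ (hnb y).1] using (f.1.map_adj (hnb y).2).symm⟩⟩
  have hι : Function.Injective ι := by
    intro f f' hff'
    refine Subtype.ext (RelHom.ext fun x => ?_)
    rcases hbip.mem_or_mem x with hx | hx
    · rw [hval f x hx, hval f' x hx]
      exact congrArg Sigma.fst hff'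
    · exact congrArg (fun s : Σ w : W, (X₂ → G.neighborSet w) => (s.2 ⟨x, hx⟩ : W)) hff'
  calc homCountOn H G X₁ ≤ Nat.card (Σ w : W, (X₂ → G.neighborSet w)) :=
        Nat.card_le_card_of_injective ι hι
    _ = ∑ w, deg G w ^ X₂.ncard := by
        simp only [Nat.card_sigma, Nat.card_fun, Nat.card_coe_set_eq, deg]

theorem homCountOn_left_le [Finite V] (hconn : H.Preconnected) [Nontrivial V] {W : Type}
    [Fintype W] {G : SimpleGraph W} {D : ℝ} (hD : ∀ w, (deg G w : ℝ) ≤ D) {t : ℕ}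
    (ht : X₂.ncard ≤ t) : (homCountOn H G X₁ : ℝ) ≤ Fintype.card W * D ^ t := by
  have hX₂ : 0 < X₂.ncard := (hbip.symm.nonempty_left hconn).ncard_pos
  have hpow : ∀ w, deg G w ^ X₂.ncard ≤ deg G w ^ t := fun w => by
    rcases Nat.eq_zero_or_pos (deg G w) with h | h
    · simp [h, zero_pow hX₂.ne']
    · exact Nat.pow_le_pow_right h ht
  calc (homCountOn H G X₁ : ℝ) ≤ ∑ w, (deg G w : ℝ) ^ t := by
        exact_mod_cast (hbip.homCountOn_left_le_sum_deg_pow hconn G).trans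
          (Finset.sum_le_sum fun w _ => hpow w)
    _ ≤ ∑ _w : W, D ^ t :=
        Finset.sum_le_sum fun w _ => pow_le_pow_left₀ (Nat.cast_nonneg _) (hD w) t
    _ = Fintype.card W * D ^ t := by simp

theorem homFractionOn_pair_le (hconn : H.Preconnected) {W : Type} {G : SimpleGraph W}
    (hG : _root_.IsBipartite G) {δ : ℝ} (hδ : 0 ≤ δ)
    (hsame : ∀ X, (X = X₁ ∨ X = X₂) → ∀ u ∈ X, ∀ w ∈ X, u ≠ w → homFractionOn H G {u, w} ≤ δ)
    {u w : V} (huw : u ≠ w) : homFractionOn H G {u, w} ≤ δ := by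
  have hcross : ∀ {a b : V}, a ∈ X₁ → b ∈ X₂ → homFractionOn H G {a, b} ≤ δ := fun ha hb => by
    rw [homFractionOn, hbip.homCountOn_pair_eq_zero hconn hG ha hb]
    simpa using hδ
  rcases hbip.mem_or_mem u with hu | hu <;> rcases hbip.mem_or_mem w with hw | hw
  · exact hsame X₁ (.inl rfl) u hu w hw huw
  · exact hcross hu hw
  · rw [Set.pair_comm]
    exact hcross hw hu
  · exact hsame X₂ (.inr rfl) u hu w hw huw

end IsBipartitionOf

theorem sum_deg_eq_two_mul_ncard_edgeSet {W : Type} [Fintype W] (G : SimpleGraph W) :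
    ∑ w, deg G w = 2 * G.edgeSet.ncard := by
  classical
  have hdeg : ∀ w, deg G w = G.degree w := fun w => by
    rw [deg, Set.ncard_eq_toFinset_card', Set.toFinset_card, card_neighborSet_eq_degree]
  rw [Finset.sum_congr rfl fun w _ => hdeg w, sum_degrees_eq_twice_card_edges,
    ← Set.ncard_coe_finset, coe_edgeFinset]

theorem deg_le_of_forall_deg_le_mul {n : ℕ} {G : SimpleGraph (Fin n)} {K p : ℝ}
    (hreg : ∀ u v, (deg G u : ℝ) ≤ K * deg G v) (hE : (G.edgeSet.ncard : ℝ) = p * n ^ 2 / 2)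
    (w : Fin n) : (deg G w : ℝ) ≤ K * (p * n) := by
  have hn : (0 : ℝ) < n := by exact_mod_cast w.pos
  have hsum : ∑ v, (deg G v : ℝ) = p * n ^ 2 := by
    have := congrArg (Nat.cast (R := ℝ)) (sum_deg_eq_two_mul_ncard_edgeSet G)
    push_cast at this
    rw [this, hE]
    ring
  refine le_of_mul_le_mul_left ?_ hn
  calc (n : ℝ) * deg G w = ∑ _v : Fin n, (deg G w : ℝ) := by simp
    _ ≤ ∑ v, K * deg G v := Finset.sum_le_sum fun v _ => hreg w v
    _ = n * (K * (p * n)) := by rw [← Finset.mul_sum, hsum]; ring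

section Copies

open Finset

variable {V W : Type} {H : SimpleGraph V} {G : SimpleGraph W}

theorem SimpleGraph.Copy.mem_range_of_toSubgraph_eq {c c' : Copy H G}
    (h : c.toSubgraph = c'.toSubgraph) (x : V) : c x ∈ Set.range c' := by
  have hverts := congrArg Subgraph.verts h
  simp only [Subgraph.map_verts, Subgraph.verts_top, Set.image_univ] at hverts
  exact hverts ▸ ⟨x, rfl⟩

theorem natCard_copy_le_mul_copyCount [Fintype V] [Nonempty V] [Fintype W] :
    Nat.card (Copy H G) ≤ Fintype.card V ^ Fintype.card V * _root_.copyCount H G := by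
  classical
  have : Finite (Copy H G) := Finite.of_injective _ (DFunLike.coe_injective (F := Copy H G))
  have := Fintype.ofFinite (Copy H G)
  rw [Nat.card_eq_fintype_card, ← Finset.card_univ, _root_.copyCount, ← Copy.range_toSubgraph,
    ← Set.image_univ, ← Finset.coe_univ, ← Finset.coe_image, Set.ncard_coe_finset]
  refine Finset.card_le_mul_card_image _ _ fun S hS => ?_
  obtain ⟨c₀, -, rfl⟩ := Finset.mem_image.1 hS
  -- a copy with the same image as `c₀` is determined by `c₀⁻¹ ∘ c : V → V`
  calc #{c ∈ (univ : Finset (Copy H G)) | c.toSubgraph = c₀.toSubgraph}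
      ≤ #(Finset.univ : Finset (V → V)) := by
        refine Finset.card_le_card_of_injOn (fun c => Function.invFun c₀ ∘ c)
          (fun _ _ => Finset.mem_coe.2 (Finset.mem_univ _)) fun c hc c' hc' hcc' => ?_
        simp only [Finset.coe_filter, Finset.mem_univ, true_and, Set.mem_ofPred_eq] at hc hc'
        refine DFunLike.ext _ _ fun x => ?_
        rw [← Function.invFun_eq (Copy.mem_range_of_toSubgraph_eq hc x),
          ← Function.invFun_eq (Copy.mem_range_of_toSubgraph_eq hc' x)]
        exact congrArg c₀ (congrFun hcc' x)
    _ = Fintype.card V ^ Fintype.card V := by simp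

theorem homCount_le_natCard_copy_add_sum [Fintype V] [DecidableEq V] [Finite W] :
    homCount H G ≤
      Nat.card (Copy H G) + ∑ p : {p : V × V // p.1 ≠ p.2}, homCountOn H G {p.1.1, p.1.2} := by
  classical
  have hsplit : homCount H G =
      Nat.card {f : H →g G // Function.Injective f} +
        Nat.card {f : H →g G // ¬ Function.Injective f} := by
    rw [homCount, ← Nat.card_sum, Nat.card_congr (Equiv.sumCompl _)]
  have hcopy : Nat.card {f : H →g G // Function.Injective f} = Nat.card (Copy H G) :=
    Nat.card_congr
      ⟨fun f => ⟨f.1, f.2⟩, fun c => ⟨c.toHom, c.injective⟩, fun _ => rfl, fun _ => rfl⟩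
  let collapse : (Σ p : {p : V × V // p.1 ≠ p.2},
      {f : H →g G // ∃ v, ∀ x ∈ ({p.1.1, p.1.2} : Set V), f x = v}) →
      {f : H →g G // ¬ Function.Injective f} :=
    fun q => ⟨q.2.1, fun hinj => q.1.2 (hinj (by
      obtain ⟨v, hv⟩ := q.2.2
      exact (hv _ (by simp)).trans (hv _ (by simp)).symm))⟩
  have hcollapse : Function.Surjective collapse := by
    rintro ⟨f, hf⟩
    obtain ⟨a, b, hab, hne⟩ := Function.not_injective_iff.1 hf
    refine ⟨⟨⟨(a, b), hne⟩, f, f a, ?_⟩, Subtype.ext rfl⟩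
    rintro x (rfl | rfl)
    exacts [rfl, hab.symm]
  rw [hsplit, hcopy]
  exact Nat.add_le_add_left ((Nat.card_le_card_of_surjective collapse hcollapse).trans_eq
    Nat.card_sigma) _

theorem homCount_le_mul_copyCount [Fintype V] [DecidableEq V] [Nonempty V] [Fintype W]
    (hpair : ∀ u w : V, u ≠ w → homFractionOn H G {u, w} ≤ (2 * Fintype.card V ^ 2 : ℝ)⁻¹) :
    (homCount H G : ℝ) ≤ 2 * Fintype.card V ^ Fintype.card V * _root_.copyCount H G := by
  have hV : (0 : ℝ) < Fintype.card V := by exact_mod_cast Fintype.card_pos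
  have hpairs : Fintype.card {p : V × V // p.1 ≠ p.2} ≤ Fintype.card V ^ 2 :=
    (Fintype.card_subtype_le _).trans_eq (by rw [Fintype.card_prod, sq])
  have hsum : (∑ p : {p : V × V // p.1 ≠ p.2}, (homCountOn H G {p.1.1, p.1.2} : ℝ)) ≤
      homCount H G / 2 := by
    calc _ ≤ ∑ _p : {p : V × V // p.1 ≠ p.2}, (2 * Fintype.card V ^ 2 : ℝ)⁻¹ * homCount H G :=
          Finset.sum_le_sum fun p _ => homCountOn_le_of_homFractionOn_le (hpair _ _ p.2)
      _ ≤ (Fintype.card V ^ 2 : ℝ) * ((2 * Fintype.card V ^ 2 : ℝ)⁻¹ * homCount H G) := by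
          rw [Finset.sum_const, Finset.card_univ, nsmul_eq_mul]
          gcongr
          exact_mod_cast hpairs
      _ = homCount H G / 2 := by field_simp
  have hcount : (homCount H G : ℝ) ≤ Nat.card (Copy H G) +
      ∑ p : {p : V × V // p.1 ≠ p.2}, (homCountOn H G {p.1.1, p.1.2} : ℝ) := by
    exact_mod_cast homCount_le_natCard_copy_add_sum (H := H) (G := G)
  have hcopy : (Nat.card (Copy H G) : ℝ) ≤
      Fintype.card V ^ Fintype.card V * _root_.copyCount H G := by
    exact_mod_cast natCard_copy_le_mul_copyCount (H := H) (G := G)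
  linarith

end Copies

/-- Let `H` be a reflective connected bipartite graph satisfying Sidorenko's conjecture
and let `K ≥ 1`. Then there are positive constants `c, C` such that every `K`-almost
regular bipartite `n`-vertex graph `G` with edge density `p` satisfying
`n^(v(H)) · p^(e(H)) ≥ C · n · (pn)^t`, where `t` is the size of the larger part of the
bipartition of `H`, contains at least `c · n^(v(H)) · p^(e(H))` copies of `H`. -/
theorem reflective_supersaturation_almost_regular {V : Type} [Fintype V]
    (H : SimpleGraph V) (X₁ X₂ : Set V) (hbip : IsBipartitionOf H X₁ X₂)
    (hconn : H.Connected) (hrefl : IsReflective H X₁ X₂)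
    (hsid : SatisfiesSidorenko H) (K : ℝ) (hK : 1 ≤ K) :
    ∃ c C : ℝ, 0 < c ∧ 0 < C ∧ ∀ (n : ℕ) (G : SimpleGraph (Fin n)) (p : ℝ),
      _root_.IsBipartite G →
      (∀ u v : Fin n, (deg G u : ℝ) ≤ K * (deg G v : ℝ)) →
      (G.edgeSet.ncard : ℝ) = p * (n : ℝ) ^ 2 / 2 →
      C * (n : ℝ) * (p * (n : ℝ)) ^ (max X₁.ncard X₂.ncard) ≤
        (n : ℝ) ^ (Fintype.card V) * p ^ (H.edgeSet.ncard) →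
      c * (n : ℝ) ^ (Fintype.card V) * p ^ (H.edgeSet.ncard) ≤ (_root_.copyCount H G : ℝ) := by
  classical
  have : Nonempty V := hconn.nonempty
  obtain ⟨M, hM⟩ := hrefl.exists_homFractionOn_pow_le
  set t := max X₁.ncard X₂.ncard
  set δ : ℝ := (2 * Fintype.card V ^ 2)⁻¹
  have hδ : 0 < δ := by positivity
  have hK₀ : 0 < K := one_pos.trans_le hK
  refine ⟨(2 * Fintype.card V ^ Fintype.card V)⁻¹, K ^ t / δ ^ 2 ^ M, by positivity,
    by positivity, fun n G p hG hreg hE hdense => ?_⟩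
  have hhom := hsid n G p hE
  have hpart : ∀ {X Y : Set V}, IsBipartitionOf H X Y → Y.ncard ≤ t → Nontrivial V →
      homFractionOn H G X ≤ δ ^ 2 ^ M := fun {X Y} hXY hY _ =>
    homFractionOn_le_of_homCountOn_le (by positivity) <| calc
      (homCountOn H G X : ℝ) ≤ n * (K * (p * n)) ^ t := by
        simpa using
          hXY.homCountOn_left_le hconn.preconnected (deg_le_of_forall_deg_le_mul hreg hE) hY
      _ = δ ^ 2 ^ M * (K ^ t / δ ^ 2 ^ M * n * (p * n) ^ t) := by field_simp; ring
      _ ≤ δ ^ 2 ^ M * homCount H G := by gcongr; exact hdense.trans hhom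
  have hsame : ∀ X, (X = X₁ ∨ X = X₂) → ∀ u ∈ X, ∀ w ∈ X, u ≠ w →
      homFractionOn H G {u, w} ≤ δ := by
    intro X hX u hu w hw huw
    have hV : Nontrivial V := ⟨u, w, huw⟩
    refine (pow_le_pow_iff_left₀ (homFractionOn_nonneg _) hδ.le (by positivity)).1
      ((hM X hX u hu w hw huw _ G).trans ?_)
    rcases hX with rfl | rfl
    exacts [hpart hbip (le_max_right _ _) hV, hpart hbip.symm (le_max_left _ _) hV]
  calc (2 * Fintype.card V ^ Fintype.card V : ℝ)⁻¹ * n ^ Fintype.card V * p ^ H.edgeSet.ncard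
      ≤ (2 * Fintype.card V ^ Fintype.card V : ℝ)⁻¹ * homCount H G := by
        rw [mul_assoc]; gcongr
    _ ≤ _root_.copyCount H G := by
        rw [inv_mul_le_iff₀ (by positivity)]
        exact homCount_le_mul_copyCount fun u w huw =>
          hbip.homFractionOn_pair_le hconn.preconnected hG hδ.le hsame huw
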